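/- arXiv:2410.03652 — 3 statements merged into one kernel-verified Lean document; each statement's English description precedes it below -/
import Mathlib

section
/- The set $\{\sqrt{n} : n \text{ a square-free positive integer}\}$ is linearly independent over $\mathbb{Q}$. -/
/-!
Write `K_P` for the subfield of `ℝ` generated by `√p`, `p ∈ P`, where `P` is a finite set of
primes. If `√p ∉ K_Q`, every element of `K_{Q ∪ {p}}` is `a + b√p` with `a, b ∈ K_Q`, uniquely.
By induction on `P`, `√n ∉ K_P` as soon as some prime `q ∉ P` divides `n` to an odd power:
squaring `√n = a + b√p` forces `ab = 0`, which puts `√n` or `√(np) = bp` into `K_Q`.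
A vanishing rational combination of `√n`, over squarefree `n` with prime factors in
`P ∪ {q}`, splits as `A + B√q = 0` with `A, B ∈ K_P` according to whether `q ∣ n`;
so `A = B = 0`, and both are combinations over `P` alone.
-/

open Finset

namespace Subfield

variable {F : Type*} [Field F] {K : Subfield F} {x : F}

theorem add_mul_eq_zero_iff (hx : x ∉ K) {a b : F} (ha : a ∈ K) (hb : b ∈ K) :
    a + b * x = 0 ↔ a = 0 ∧ b = 0 := by
  refine ⟨fun h => ?_, fun ⟨ha0, hb0⟩ => by simp [ha0, hb0]⟩
  by_cases hb0 : b = 0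
  · simpa [hb0] using h
  · refine absurd ?_ hx
    rw [show x = -a / b by field_simp; linear_combination h]
    exact div_mem (neg_mem ha) hb

theorem exists_eq_add_mul_of_mem_closure (hx2 : x * x ∈ K) (hx : x ∉ K) {s : Set F}
    (hs : s ⊆ insert x K) {y : F} (hy : y ∈ closure s) :
    ∃ a ∈ K, ∃ b ∈ K, y = a + b * x := by
  induction hy using closure_induction with
  | mem y hy =>
    rcases hs hy with rfl | hyK
    · exact ⟨0, K.zero_mem, 1, K.one_mem, by ring⟩
    · exact ⟨y, hyK, 0, K.zero_mem, by ring⟩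
  | one => exact ⟨1, K.one_mem, 0, K.zero_mem, by ring⟩
  | add y z _ _ ihy ihz =>
    obtain ⟨a, ha, b, hb, rfl⟩ := ihy
    obtain ⟨c, hc, d, hd, rfl⟩ := ihz
    exact ⟨a + c, add_mem ha hc, b + d, add_mem hb hd, by ring⟩
  | neg y _ ih =>
    obtain ⟨a, ha, b, hb, rfl⟩ := ih
    exact ⟨-a, neg_mem ha, -b, neg_mem hb, by ring⟩
  | mul y z _ _ ihy ihz =>
    obtain ⟨a, ha, b, hb, rfl⟩ := ihy
    obtain ⟨c, hc, d, hd, rfl⟩ := ihz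
    exact ⟨a * c + b * d * (x * x), add_mem (mul_mem ha hc) (mul_mem (mul_mem hb hd) hx2),
      a * d + b * c, add_mem (mul_mem ha hd) (mul_mem hb hc), by ring⟩
  | inv y _ ih =>
    obtain ⟨a, ha, b, hb, rfl⟩ := ih
    set d := a * a - b * b * (x * x)
    have hd : d = (a + b * x) * (a + -b * x) := by ring
    have hdK : d ∈ K := sub_mem (mul_mem ha ha) (mul_mem (mul_mem hb hb) hx2)
    by_cases hd0 : d = 0
    · have hy0 : a + b * x = 0 := by
        rcases mul_eq_zero.1 (hd ▸ hd0) with h | h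
        · exact h
        · obtain ⟨rfl, hb0⟩ := (add_mul_eq_zero_iff hx ha (neg_mem hb)).1 h
          simp [neg_eq_zero.1 hb0]
      exact ⟨0, K.zero_mem, 0, K.zero_mem, by simp [hy0]⟩
    · refine ⟨a / d, div_mem ha hdK, -b / d, div_mem (neg_mem hb) hdK,
        inv_eq_of_mul_eq_one_right ?_⟩
      field_simp
      linear_combination hd.symm

end Subfield

theorem Nat.primeFactors_div_of_squarefree {n q : ℕ} (hn : Squarefree n) (hq : q.Prime)
    (hqn : q ∣ n) : (n / q).primeFactors = n.primeFactors.erase q := by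
  simpa [Nat.gcd_eq_right hqn, hq.primeFactors, sdiff_singleton_eq_erase] using
    Nat.primeFactors_div_gcd hn hq.ne_zero

noncomputable def sqrtField (P : Finset ℕ) : Subfield ℝ :=
  Subfield.closure ((fun p : ℕ => √(p : ℝ)) '' P)

theorem sqrt_mem_sqrtField {P : Finset ℕ} {p : ℕ} (hp : p ∈ P) : √(p : ℝ) ∈ sqrtField P :=
  Subfield.subset_closure ⟨p, hp, rfl⟩

theorem sqrtField_empty : sqrtField ∅ = ⊥ := by
  simp [sqrtField]

theorem exists_eq_add_mul_sqrt_of_mem_sqrtField_insert {p : ℕ} {Q : Finset ℕ}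
    (hp : √(p : ℝ) ∉ sqrtField Q) {y : ℝ} (hy : y ∈ sqrtField (insert p Q)) :
    ∃ a ∈ sqrtField Q, ∃ b ∈ sqrtField Q, y = a + b * √p := by
  refine Subfield.exists_eq_add_mul_of_mem_closure ?_ hp ?_ hy
  · rw [Real.mul_self_sqrt p.cast_nonneg]
    exact natCast_mem _ p
  · rw [coe_insert, Set.image_insert_eq]
    exact Set.insert_subset_insert Subfield.subset_closure

theorem sqrt_mem_sqrtField_of_primeFactors_subset {P : Finset ℕ} {n : ℕ}
    (h : n.primeFactors ⊆ P) : √(n : ℝ) ∈ sqrtField P := by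
  induction n using Nat.recOnMul with
  | zero => simp
  | one => simp
  | prime p hp => exact sqrt_mem_sqrtField (h (by simp [hp]))
  | mul a b iha ihb =>
    rcases eq_or_ne a 0 with rfl | ha
    · simp
    rcases eq_or_ne b 0 with rfl | hb
    · simp
    rw [Nat.primeFactors_mul ha hb, union_subset_iff] at h
    rw [Nat.cast_mul, Real.sqrt_mul a.cast_nonneg]
    exact mul_mem (iha h.1) (ihb h.2)

theorem sqrt_notMem_sqrtField {P : Finset ℕ} (hP : ∀ p ∈ P, p.Prime) {q n : ℕ} (hqP : q ∉ P)
    (hn : Odd (n.factorization q)) : √(n : ℝ) ∉ sqrtField P := by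
  induction P using Finset.induction_on generalizing q n with
  | empty =>
    rw [sqrtField_empty, Subfield.bot_eq_of_charZero]
    rintro ⟨r, hr⟩
    refine irrational_sqrt_natCast_iff.2 ?_ ⟨r, hr⟩
    rintro ⟨m, rfl⟩
    rw [← sq, Nat.factorization_pow] at hn
    exact Nat.not_odd_iff_even.2 (by simp) hn
  | insert p Q hpQ ih =>
    have hp : p.Prime := hP p (mem_insert_self p Q)
    have hQ : ∀ r ∈ Q, r.Prime := fun r hr => hP r (mem_insert_of_mem hr)
    have hqp : q ≠ p := fun h => hqP (h ▸ mem_insert_self p Q)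
    have hqQ : q ∉ Q := fun h => hqP (mem_insert_of_mem h)
    have hpK : √(p : ℝ) ∉ sqrtField Q := ih hQ hpQ (by simp [hp.factorization_self])
    intro hnK
    obtain ⟨a, ha, b, hb, hab⟩ := exists_eq_add_mul_sqrt_of_mem_sqrtField_insert hpK hnK
    have hnn := Real.mul_self_sqrt (n.cast_nonneg : (0 : ℝ) ≤ n)
    have hpp := Real.mul_self_sqrt (p.cast_nonneg : (0 : ℝ) ≤ p)
    have hsq : (a * a + b * b * p - n) + 2 * a * b * √p = 0 := by
      rw [hab] at hnn
      linear_combination hnn - b * b * hpp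
    have hab0 : a = 0 ∨ b = 0 := by
      have hcK : a * a + b * b * p - n ∈ sqrtField Q :=
        sub_mem (add_mem (mul_mem ha ha) (mul_mem (mul_mem hb hb) (natCast_mem _ p)))
          (natCast_mem _ n)
      have hdK : 2 * a * b ∈ sqrtField Q := mul_mem (mul_mem (ofNat_mem _ 2) ha) hb
      simpa using ((Subfield.add_mul_eq_zero_iff hpK hcK hdK).1 hsq).2
    rcases hab0 with rfl | rfl
    · have hn0 : n ≠ 0 := by rintro rfl; simp at hn
      have hnp : Odd ((n * p).factorization q) := by
        simpa [Nat.factorization_mul hn0 hp.ne_zero, hp.factorization, hqp] using hn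
      refine ih hQ hqQ hnp ?_
      rw [Nat.cast_mul, Real.sqrt_mul n.cast_nonneg, hab, zero_add, mul_assoc, hpp]
      exact mul_mem hb (natCast_mem _ p)
    · exact ih hQ hqQ hn (by simpa [hab] using ha)

theorem sum_mul_sqrt_mem_sqrtField {P s : Finset ℕ} (hs : ∀ n ∈ s, n.primeFactors ⊆ P)
    (c : ℕ → ℚ) : ∑ n ∈ s, (c n : ℝ) * √n ∈ sqrtField P :=
  sum_mem fun n hn =>
    mul_mem (SubfieldClass.ratCast_mem _ _) (sqrt_mem_sqrtField_of_primeFactors_subset (hs n hn))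

theorem sum_mul_sqrt_eq_add_mul_sqrt (q : ℕ) (s : Finset ℕ) (c : ℕ → ℚ) :
    ∑ n ∈ s, (c n : ℝ) * √n = ∑ n ∈ s.filter (¬q ∣ ·), (c n : ℝ) * √n +
      (∑ m ∈ (s.filter (q ∣ ·)).image (· / q), (c (q * m) : ℝ) * √m) * √q := by
  rw [← sum_filter_not_add_sum_filter s (q ∣ ·), sum_image, sum_mul]
  · congr 1
    refine sum_congr rfl fun n hn => ?_
    have hqn := (mem_filter.1 hn).2
    conv_lhs => rw [← Nat.mul_div_cancel' hqn]
    rw [Nat.cast_mul, Real.sqrt_mul q.cast_nonneg]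
    ring
  · intro a ha b hb hab
    exact (Nat.div_left_inj (mem_filter.1 ha).2 (mem_filter.1 hb).2).1 hab

theorem eq_zero_of_sum_mul_sqrt_eq_zero {P : Finset ℕ} (hP : ∀ p ∈ P, p.Prime) {s : Finset ℕ}
    (hs : ∀ n ∈ s, Squarefree n ∧ n.primeFactors ⊆ P) {c : ℕ → ℚ}
    (h : ∑ n ∈ s, (c n : ℝ) * √n = 0) : ∀ n ∈ s, c n = 0 := by
  induction P using Finset.induction_on generalizing s c with
  | empty =>
    have hs1 : ∀ n ∈ s, n = 1 := fun n hn => by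
      obtain ⟨hsq, hsub⟩ := hs n hn
      simpa [hsq.ne_zero] using subset_empty.1 hsub
    intro n hn
    obtain rfl := hs1 n hn
    rw [sum_eq_single_of_mem 1 hn fun m hm hm1 => absurd (hs1 m hm) hm1] at h
    simpa using h
  | insert q P hqP ih =>
    have hq : q.Prime := hP q (mem_insert_self q P)
    have hP' : ∀ p ∈ P, p.Prime := fun p hp => hP p (mem_insert_of_mem hp)
    have hqK : √(q : ℝ) ∉ sqrtField P :=
      sqrt_notMem_sqrtField hP' hqP (by simp [hq.factorization_self])
    have hs₀ : ∀ n ∈ s.filter (¬q ∣ ·), Squarefree n ∧ n.primeFactors ⊆ P := by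
      intro n hn
      obtain ⟨hn, hqn⟩ := mem_filter.1 hn
      obtain ⟨hsq, hsub⟩ := hs n hn
      have hqn' : q ∉ n.primeFactors := fun h => hqn (Nat.dvd_of_mem_primeFactors h)
      rw [subset_insert_iff, erase_eq_of_notMem hqn'] at hsub
      exact ⟨hsq, hsub⟩
    have hs₁ : ∀ m ∈ (s.filter (q ∣ ·)).image (· / q), Squarefree m ∧ m.primeFactors ⊆ P := by
      simp only [mem_image, mem_filter]
      rintro _ ⟨n, ⟨hn, hqn⟩, rfl⟩
      obtain ⟨hsq, hsub⟩ := hs n hn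
      refine ⟨hsq.squarefree_of_dvd (Nat.div_dvd_of_dvd hqn), ?_⟩
      rwa [Nat.primeFactors_div_of_squarefree hsq hq hqn, ← subset_insert_iff]
    rw [sum_mul_sqrt_eq_add_mul_sqrt q] at h
    obtain ⟨h₀, h₁⟩ := (Subfield.add_mul_eq_zero_iff hqK
      (sum_mul_sqrt_mem_sqrtField (fun n hn => (hs₀ n hn).2) c)
      (sum_mul_sqrt_mem_sqrtField (fun m hm => (hs₁ m hm).2) _)).1 h
    intro n hn
    by_cases hqn : q ∣ n
    · rw [← Nat.mul_div_cancel' hqn]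
      exact ih hP' hs₁ h₁ (n / q) (mem_image_of_mem _ (mem_filter.2 ⟨hn, hqn⟩))
    · exact ih hP' hs₀ h₀ n (mem_filter.2 ⟨hn, hqn⟩)

/-- Besicovitch's theorem: the square roots of the square-free positive integers are
linearly independent over `ℚ`. -/
theorem sqrt_squarefree_linearIndependent (s : Finset ℕ) (hs : ∀ n ∈ s, Squarefree n)
    (c : ℕ → ℚ) (h : ∑ n ∈ s, (c n : ℝ) * Real.sqrt n = 0) :
    ∀ n ∈ s, c n = 0 :=
  eq_zero_of_sum_mul_sqrt_eq_zero (P := s.biUnion Nat.primeFactors)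
    (fun _ hp => by
      obtain ⟨n, -, hp⟩ := mem_biUnion.1 hp
      exact Nat.prime_of_mem_primeFactors hp)
    (fun n hn => ⟨hs n hn, subset_biUnion_of_mem _ hn⟩) h
end

section
/- Let $m \ge 1$ and let $n_1, \dots, n_m \le M$ be positive integers, and let $\varepsilon_1, \dots, \varepsilon_m \in \{+1, -1\}$. If $\sum_{j=1}^m \varepsilon_j \sqrt{n_j} \ne 0$, then $\left| \sum_{j=1}^m \varepsilon_j \sqrt{n_j} \right| \ge (m \sqrt{M})^{-(2^{m-1}-1)}$. -/
/-!
Write the sum of `m` terms as `S = c + ∑ tᵢ` with `c² ∈ ℤ`, `tᵢ² ∈ ℤ` and `|c|, |tᵢ| ≤ R`, and let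
`P = ∏_σ (c + ∑ σᵢ tᵢ)` over all `2^(m-1)` sign patterns `σ`. As a function of `c`, `P` is an even
polynomial with integer coefficients, so `P ∈ ℤ`. If `P ≠ 0` then `1 ≤ |P| ≤ |S| (mR)^(2^(m-1)-1)`,
since each of the other factors is at most `mR`. If `P = 0`, some factor vanishes, and then `S` is
twice the sum of a proper sub-collection of the `tᵢ`, to which induction on `m` applies.
-/

open Polynomial

/-- `signProd t c = ∏_{σ ∈ {±1}^t} (c + ∑ σᵢ tᵢ)`. -/
def signProd : List ℝ → ℝ → ℝ
  | [], c => c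
  | y :: t, c => signProd t (c + y) * signProd t (c - y)

lemma abs_add_sum_le_of_cons {A c y : ℝ} {t : List ℝ}
    (h : |c| + ((y :: t).map abs).sum ≤ A) :
    |c + y| + (t.map abs).sum ≤ A ∧ |c - y| + (t.map abs).sum ≤ A := by
  rw [List.map_cons, List.sum_cons] at h
  exact ⟨by linarith [abs_add_le c y], by linarith [abs_sub c y]⟩

lemma abs_signProd_le {A : ℝ} : ∀ (t : List ℝ) (c : ℝ),
    |c| + (t.map abs).sum ≤ A → |signProd t c| ≤ A ^ 2 ^ t.length
  | [], c, h => by simpa [signProd] using h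
  | y :: t, c, h => by
    obtain ⟨hadd, hsub⟩ := abs_add_sum_le_of_cons h
    calc |signProd (y :: t) c| = |signProd t (c + y)| * |signProd t (c - y)| := abs_mul _ _
      _ ≤ A ^ 2 ^ t.length * A ^ 2 ^ t.length :=
          mul_le_mul (abs_signProd_le t _ hadd) (abs_signProd_le t _ hsub) (abs_nonneg _)
            ((abs_nonneg _).trans (abs_signProd_le t _ hadd))
      _ = A ^ 2 ^ (y :: t).length := by rw [← pow_add, List.length_cons, pow_succ, mul_two]

lemma exists_signProd_eq_mul {A : ℝ} : ∀ (t : List ℝ) (c : ℝ), |c| + (t.map abs).sum ≤ A →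
    ∃ H : ℝ, signProd t c = (c + t.sum) * H ∧ |H| ≤ A ^ (2 ^ t.length - 1)
  | [], c, _ => ⟨1, by simp [signProd], by simp⟩
  | y :: t, c, h => by
    obtain ⟨hadd, hsub⟩ := abs_add_sum_le_of_cons h
    obtain ⟨H, hH, hHle⟩ := exists_signProd_eq_mul t (c + y) hadd
    refine ⟨H * signProd t (c - y), by rw [signProd, hH, List.sum_cons]; ring, ?_⟩
    calc |H * signProd t (c - y)| = |H| * |signProd t (c - y)| := abs_mul _ _
      _ ≤ A ^ (2 ^ t.length - 1) * A ^ 2 ^ t.length :=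
          mul_le_mul hHle (abs_signProd_le t _ hsub) (abs_nonneg _)
            ((abs_nonneg _).trans hHle)
      _ = A ^ (2 ^ (y :: t).length - 1) := by
          rw [← pow_add, List.length_cons, pow_succ]
          have := t.length.one_le_two_pow
          congr 1
          omega

lemma signProd_neg : ∀ (t : List ℝ) (c : ℝ), signProd t (-c) = (-1) ^ 2 ^ t.length * signProd t c
  | [], c => by simp [signProd]
  | y :: t, c => by
    rw [signProd, signProd, show -c + y = -(c - y) by ring, show -c - y = -(c + y) by ring,
      signProd_neg t, signProd_neg t, List.length_cons, pow_succ, pow_mul]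
    ring

lemma signProd_cons_neg (y : ℝ) (t : List ℝ) (c : ℝ) :
    signProd (y :: t) (-c) = signProd (y :: t) c := by
  have heven : Even (2 ^ (y :: t).length) := Nat.even_pow.2 ⟨even_two, Nat.succ_ne_zero _⟩
  rw [signProd_neg, heven.neg_one_pow, one_mul]

lemma exists_sublist_of_signProd_eq_zero : ∀ (t : List ℝ) (c : ℝ), signProd t c = 0 →
    ∃ u : List ℝ, u.Sublist t ∧ c + t.sum = 2 * u.sum
  | [], c, h => ⟨[], .refl _, by simpa [signProd] using h⟩
  | y :: t, c, h => by
    rcases mul_eq_zero.1 h with h | h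
    · obtain ⟨u, hu, hsum⟩ := exists_sublist_of_signProd_eq_zero t _ h
      exact ⟨u, hu.cons y, by rw [List.sum_cons]; linarith⟩
    · obtain ⟨u, hu, hsum⟩ := exists_sublist_of_signProd_eq_zero t _ h
      exact ⟨y :: u, hu.cons_cons y, by rw [List.sum_cons, List.sum_cons]; linarith⟩

section QuadraticShift

variable {y : ℝ} {k : ℤ}

lemma exists_aeval_add_sub_eq (hy : y ^ 2 = k) (Q : ℤ[X]) :
    ∃ a b : ℤ[X], ∀ x : ℝ, aeval (x + y) Q = aeval x a + y * aeval x b ∧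
      aeval (x - y) Q = aeval x a - y * aeval x b := by
  induction Q using Polynomial.induction_on with
  | C r => exact ⟨C r, 0, fun x => by simp⟩
  | add p q hp hq =>
    obtain ⟨a₁, b₁, h₁⟩ := hp
    obtain ⟨a₂, b₂, h₂⟩ := hq
    refine ⟨a₁ + a₂, b₁ + b₂, fun x => ?_⟩
    simp only [map_add, (h₁ x).1, (h₁ x).2, (h₂ x).1, (h₂ x).2]
    constructor <;> ring
  | monomial n r ih =>
    obtain ⟨a, b, hab⟩ := ih
    refine ⟨X * a + (k : ℤ[X]) * b, a + X * b, fun x => ?_⟩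
    have hmul (z : ℝ) : aeval z (C r * X ^ (n + 1)) = aeval z (C r * X ^ n) * z := by
      rw [pow_succ, ← mul_assoc, map_mul, aeval_X]
    rw [hmul, hmul, (hab x).1, (hab x).2]
    simp only [map_add, map_mul, aeval_X, map_intCast]
    constructor <;> linear_combination aeval x b * hy

lemma exists_aeval_eq_aeval_add_mul_aeval_sub (hy : y ^ 2 = k) (Q : ℤ[X]) :
    ∃ Q' : ℤ[X], ∀ x : ℝ, aeval x Q' = aeval (x + y) Q * aeval (x - y) Q := by
  obtain ⟨a, b, hab⟩ := exists_aeval_add_sub_eq hy Q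
  refine ⟨a ^ 2 - (k : ℤ[X]) * b ^ 2, fun x => ?_⟩
  rw [(hab x).1, (hab x).2]
  simp only [map_sub, map_pow, map_mul, map_intCast]
  linear_combination aeval x b ^ 2 * hy

lemma exists_int_eq_aeval_of_even (hy : y ^ 2 = k) {Q : ℤ[X]} (heven : aeval (-y) Q = aeval y Q) :
    ∃ z : ℤ, aeval y Q = z := by
  obtain ⟨a, b, hab⟩ := exists_aeval_add_sub_eq hy Q
  -- `Q(±y) = a(0) ± y b(0)`, and evenness kills the `y b(0)` part.
  obtain ⟨hadd, hsub⟩ := hab 0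
  rw [zero_add] at hadd
  rw [zero_sub] at hsub
  refine ⟨a.eval 0, ?_⟩
  have : aeval (0 : ℝ) a = (a.eval 0 : ℤ) := by
    simp [aeval_def, eval₂_at_zero, coeff_zero_eq_eval_zero]
  linarith

end QuadraticShift

lemma exists_intPoly_signProd : ∀ t : List ℝ, (∀ y ∈ t, ∃ k : ℤ, y ^ 2 = k) →
    ∃ Q : ℤ[X], ∀ c : ℝ, signProd t c = aeval c Q
  | [], _ => ⟨X, fun c => by simp [signProd]⟩
  | y :: t, h => by
    obtain ⟨Q, hQ⟩ := exists_intPoly_signProd t fun z hz => h z (List.mem_cons_of_mem y hz)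
    obtain ⟨k, hk⟩ := h y List.mem_cons_self
    obtain ⟨Q', hQ'⟩ := exists_aeval_eq_aeval_add_mul_aeval_sub hk Q
    exact ⟨Q', fun c => by rw [signProd, hQ, hQ, hQ']⟩

lemma exists_int_eq_signProd_cons {y c : ℝ} {t : List ℝ} (h : ∀ x ∈ y :: t, ∃ k : ℤ, x ^ 2 = k)
    {k : ℤ} (hc : c ^ 2 = k) : ∃ z : ℤ, signProd (y :: t) c = z := by
  obtain ⟨Q, hQ⟩ := exists_intPoly_signProd _ h
  rw [hQ]
  exact exists_int_eq_aeval_of_even hc (by rw [← hQ, ← hQ, signProd_cons_neg])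

lemma one_le_abs_of_sq_eq_int {c : ℝ} {k : ℤ} (hc : c ^ 2 = k) (hc0 : c ≠ 0) : 1 ≤ |c| := by
  have hk : (0 : ℤ) < k := by exact_mod_cast (show (0 : ℝ) < k by rw [← hc]; positivity)
  have hk : (1 : ℝ) ≤ k := by exact_mod_cast hk
  nlinarith [sq_abs c, abs_nonneg c]

lemma cast_mul_pow_two_pow_sub_one_le {R : ℝ} (hR : 1 ≤ R) {i j : ℕ} (hij : i ≤ j) (hj : 1 ≤ j) :
    (i * R) ^ (2 ^ (i - 1) - 1) ≤ (j * R) ^ (2 ^ (j - 1) - 1) := by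
  have hjR : 1 ≤ (j : ℝ) * R := one_le_mul_of_one_le_of_one_le (by exact_mod_cast hj) hR
  calc (i * R) ^ (2 ^ (i - 1) - 1) ≤ (j * R) ^ (2 ^ (i - 1) - 1) := by gcongr
    _ ≤ (j * R) ^ (2 ^ (j - 1) - 1) := by gcongr; omega

theorem one_le_abs_sum_mul_pow {R : ℝ} (hR : 1 ≤ R) (l : List ℝ)
    (hint : ∀ y ∈ l, ∃ k : ℤ, y ^ 2 = k) (hle : ∀ y ∈ l, |y| ≤ R) (hsum : l.sum ≠ 0) :
    1 ≤ |l.sum| * (l.length * R) ^ (2 ^ (l.length - 1) - 1) := by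
  induction hlen : l.length using Nat.strong_induction_on generalizing l with
  | _ m ih =>
  subst hlen
  rcases l with _ | ⟨c, _ | ⟨y, t⟩⟩
  · exact absurd List.sum_nil hsum
  · obtain ⟨k, hk⟩ := hint c List.mem_cons_self
    simpa using one_le_abs_of_sq_eq_int hk (by simpa using hsum)
  obtain ⟨k, hk⟩ := hint c List.mem_cons_self
  obtain ⟨z, hz⟩ := exists_int_eq_signProd_cons (fun x hx => hint x (.tail c hx)) hk
  have hbound : |c| + ((y :: t).map abs).sum ≤ (c :: y :: t).length * R := by
    simpa using List.sum_le_card_nsmul ((c :: y :: t).map abs) R (by simpa using hle)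
  obtain ⟨H, hH, hHle⟩ := exists_signProd_eq_mul (y :: t) c hbound
  rw [List.sum_cons] at hsum ⊢
  rcases eq_or_ne z 0 with rfl | hz0
  · obtain ⟨u, hu, hu2⟩ := exists_sublist_of_signProd_eq_zero _ _ (hz.trans Int.cast_zero)
    have hu0 : u.sum ≠ 0 := fun h => hsum (by rw [hu2, h, mul_zero])
    have hulen : u.length < (c :: y :: t).length := Nat.lt_succ_of_le hu.length_le
    calc 1 ≤ |u.sum| * (u.length * R) ^ (2 ^ (u.length - 1) - 1) :=
          ih _ hulen u (fun x hx => hint x (.tail c (hu.subset hx)))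
            (fun x hx => hle x (.tail c (hu.subset hx))) hu0 rfl
      _ ≤ _ :=
          mul_le_mul (by rw [hu2, abs_mul, abs_two]; linarith [abs_nonneg u.sum])
            (cast_mul_pow_two_pow_sub_one_le hR hulen.le (by simp)) (by positivity) (abs_nonneg _)
  · calc (1 : ℝ) ≤ |(z : ℝ)| := by exact_mod_cast Int.one_le_abs hz0
      _ = |c + (y :: t).sum| * |H| := by rw [← hz, hH, abs_mul]
      _ ≤ _ := mul_le_mul_of_nonneg_left hHle (abs_nonneg _)

lemma abs_sign_mul_sqrt {ε : ℝ} (hε : ε = 1 ∨ ε = -1) (x : ℝ) : |ε * √x| = √x := by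
  rcases hε with rfl | rfl <;> simp

lemma rpow_neg_two_pow_sub_one {x : ℝ} (hx : 0 ≤ x) (m : ℕ) :
    x ^ (-((2 : ℝ) ^ (m - 1) - 1)) = (x ^ (2 ^ (m - 1) - 1))⁻¹ := by
  rw [← Real.rpow_natCast x, ← Real.rpow_neg hx, Nat.cast_sub Nat.one_le_two_pow]
  push_cast
  rfl

/-- Hughes–Rudnick: if `n₁, …, n_m ≤ M` are positive integers, `ε_j = ±1`, and
`∑ ε_j √(n_j) ≠ 0`, then `|∑ ε_j √(n_j)| ≥ (m √M)^{-(2^{m-1}-1)}`. -/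
theorem signed_sqrt_sum_lower_bound (m : ℕ) (hm : 1 ≤ m) (M : ℕ)
    (n : Fin m → ℕ) (ε : Fin m → ℝ)
    (hn : ∀ j, 1 ≤ n j ∧ n j ≤ M) (hε : ∀ j, ε j = 1 ∨ ε j = -1)
    (h : ∑ j, ε j * Real.sqrt (n j) ≠ 0) :
    ((m : ℝ) * Real.sqrt M) ^ (-((2 : ℝ) ^ (m - 1) - 1)) ≤ |∑ j, ε j * Real.sqrt (n j)| := by
  have hM : 1 ≤ √(M : ℝ) :=
    Real.one_le_sqrt.2 (by exact_mod_cast (hn ⟨0, hm⟩).1.trans (hn ⟨0, hm⟩).2)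
  have key := one_le_abs_sum_mul_pow hM (List.ofFn fun j => ε j * √(n j : ℝ))
    (List.forall_mem_ofFn_iff.2 fun j => ⟨n j, by
      rw [← sq_abs, abs_sign_mul_sqrt (hε j), Real.sq_sqrt (Nat.cast_nonneg _), Int.cast_natCast]⟩)
    (List.forall_mem_ofFn_iff.2 fun j => by
      rw [abs_sign_mul_sqrt (hε j)]
      exact Real.sqrt_le_sqrt (by exact_mod_cast (hn j).2))
    (by rwa [List.sum_ofFn])
  rw [List.length_ofFn, List.sum_ofFn] at key
  have hpos : 0 < (m : ℝ) * √(M : ℝ) := mul_pos (by exact_mod_cast hm) (by linarith)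
  rw [rpow_neg_two_pow_sub_one hpos.le, inv_le_iff_one_le_mul₀ (pow_pos hpos _)]
  exact key
end

section
/- The random series $F_{\mathbb{X}} = \frac{1}{\pi\sqrt{2}} \sum_{n \text{ square-free}} n^{-3/4} \sum_{r=1}^{\infty} d(nr^2) r^{-3/2} \cos(2\pi r \mathbb{X}_n - \pi/4)$ converges almost surely, where $\{\mathbb{X}_n\}$ are i.i.d. uniform on $[0,1]$ indexed by square-free positive integers. -/
/-!
Each summand `F_n(X_n)` is a bounded, mean-zero function of `X_n`: the inner series converges
absolutely because `d(n r²) ≤ d(n) d(r)²` and `∑ d(r)² r^{-3/2} < ∞`, and every cosine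
integrates to zero over a period. Its variance is therefore `O(d(n)² n^{-3/2})`, which is
summable, so the partial sums form an `L²`-bounded, hence `L¹`-bounded, martingale and converge
almost surely.
-/

open Finset Real MeasureTheory ProbabilityTheory Filter Topology

theorem Nat.card_divisors_mul_le (m n : ℕ) :
    #(m * n).divisors ≤ #m.divisors * #n.divisors := by
  rw [Nat.divisors_mul]
  exact card_mul_le

def divisorPairFactorization (x : Σ n : ℕ, ↥(n.divisors ×ˢ n.divisors)) : ℕ × ℕ × ℕ × ℕ :=
  let g := x.2.1.1.gcd x.2.1.2
  (g, x.2.1.1 / g, x.2.1.2 / g, x.1 / x.2.1.1.lcm x.2.1.2)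

theorem divisorPairFactorization_spec (x : Σ n : ℕ, ↥(n.divisors ×ˢ n.divisors)) :
    let y := divisorPairFactorization x
    y.1 * y.2.1 = x.2.1.1 ∧ y.1 * y.2.2.1 = x.2.1.2 ∧ y.1 * y.2.1 * y.2.2.1 * y.2.2.2 = x.1 := by
  obtain ⟨n, ⟨u, v⟩, huv⟩ := x
  simp only [mem_product, Nat.mem_divisors] at huv
  have hu : u.gcd v * (u / u.gcd v) = u := Nat.mul_div_cancel' (Nat.gcd_dvd_left u v)
  refine ⟨hu, Nat.mul_div_cancel' (Nat.gcd_dvd_right u v), ?_⟩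
  change u.gcd v * (u / u.gcd v) * (v / u.gcd v) * (n / u.lcm v) = n
  rw [hu, ← Nat.mul_div_assoc _ (Nat.gcd_dvd_right u v)]
  exact Nat.mul_div_cancel' (Nat.lcm_dvd huv.1.1 huv.2.1)

theorem divisorPairFactorization_injective : Function.Injective divisorPairFactorization := by
  rintro ⟨n, ⟨u, v⟩, huv⟩ ⟨n', ⟨u', v'⟩, huv'⟩ h
  obtain ⟨hu, hv, hn⟩ := divisorPairFactorization_spec ⟨n, ⟨u, v⟩, huv⟩
  obtain ⟨hu', hv', hn'⟩ := divisorPairFactorization_spec ⟨n', ⟨u', v'⟩, huv'⟩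
  simp only [h] at hu hv hn
  obtain rfl : n = n' := hn.symm.trans hn'
  obtain rfl : u = u' := hu.symm.trans hu'
  obtain rfl : v = v' := hv.symm.trans hv'
  rfl

theorem summable_rpow_neg_mul_mul_mul {s : ℝ} (hs : 1 < s) :
    Summable fun x : ℕ × ℕ × ℕ × ℕ => ((x.1 * x.2.1 * x.2.2.1 * x.2.2.2 : ℕ) : ℝ) ^ (-s) := by
  set f : ℕ → ℝ := fun n => (n : ℝ) ^ (-s)
  have hf0 : 0 ≤ f := fun n => by positivity
  have hf : Summable f := Real.summable_nat_rpow.2 (by linarith)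
  have hf2 := hf.mul_of_nonneg hf hf0 hf0
  have hf3 := hf.mul_of_nonneg hf2 hf0 fun _ => mul_nonneg (hf0 _) (hf0 _)
  refine (hf.mul_of_nonneg hf3 hf0 fun _ => mul_nonneg (hf0 _) (mul_nonneg (hf0 _) (hf0 _))).congr
    fun x => ?_
  simp only [f, Nat.cast_mul]
  rw [Real.mul_rpow (by positivity) (by positivity),
    Real.mul_rpow (by positivity) (by positivity), Real.mul_rpow (by positivity) (by positivity)]
  ring

/-- `d(n)²` counts pairs of divisors of `n`, which `divisorPairFactorization` injects into
factorizations `n = a * b * c * e`; hence `∑ d(n)² n^{-s} ≤ ζ(s)⁴`. -/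
theorem summable_card_divisors_sq_mul_rpow_neg {s : ℝ} (hs : 1 < s) :
    Summable fun n : ℕ => (#n.divisors : ℝ) ^ 2 * (n : ℝ) ^ (-s) := by
  have hpairs : Summable fun x : Σ n : ℕ, ↥(n.divisors ×ˢ n.divisors) => (x.1 : ℝ) ^ (-s) :=
    ((summable_rpow_neg_mul_mul_mul hs).comp_injective divisorPairFactorization_injective).congr
      fun x => by simp only [Function.comp, (divisorPairFactorization_spec x).2.2]
  refine ((summable_sigma_of_nonneg fun _ => by positivity).1 hpairs).2.congr fun n => ?_
  change ∑' _ : ↥(n.divisors ×ˢ n.divisors), (n : ℝ) ^ (-s) = _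
  rw [tsum_const, Nat.card_eq_fintype_card, Fintype.card_coe, card_product, nsmul_eq_mul]
  push_cast
  ring

theorem integral_Icc_cos_two_pi_nat_mul_sub {k : ℕ} (hk : k ≠ 0) (θ : ℝ) :
    ∫ x in Set.Icc (0 : ℝ) 1, cos (2 * π * k * x - θ) = 0 := by
  have hc : 2 * π * k ≠ 0 := by positivity
  rw [integral_Icc_eq_integral_Ioc, ← intervalIntegral.integral_of_le zero_le_one]
  simp_rw [sub_eq_add_neg]
  rw [intervalIntegral.integral_comp_mul_add cos hc, integral_cos, mul_one, mul_zero,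
    zero_add, add_comm, mul_comm _ (k : ℝ), sin_add_nat_mul_two_pi, sub_self, smul_zero]

section TrigonometricSeries

variable {a : ℕ → ℝ} (θ : ℝ)

theorem norm_mul_cos_le (r : ℕ) (x : ℝ) :
    ‖a r * cos (2 * π * ((r : ℝ) + 1) * x - θ)‖ ≤ |a r| := by
  rw [norm_mul, Real.norm_eq_abs, Real.norm_eq_abs]
  exact mul_le_of_le_one_right (abs_nonneg _) (abs_cos_le_one _)

theorem continuous_tsum_mul_cos (ha : Summable a) :
    Continuous fun x => ∑' r, a r * cos (2 * π * ((r : ℝ) + 1) * x - θ) :=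
  continuous_tsum (fun r => by fun_prop) ha.abs (norm_mul_cos_le θ)

theorem abs_tsum_mul_cos_le (ha : Summable a) (x : ℝ) :
    |∑' r, a r * cos (2 * π * ((r : ℝ) + 1) * x - θ)| ≤ ∑' r, |a r| :=
  tsum_of_norm_bounded ha.abs.hasSum (norm_mul_cos_le θ · x)

theorem integral_Icc_tsum_mul_cos (ha : Summable a) :
    ∫ x in Set.Icc (0 : ℝ) 1, ∑' r, a r * cos (2 * π * ((r : ℝ) + 1) * x - θ) = 0 := by
  have hint : ∀ r : ℕ, Integrable (fun x => a r * cos (2 * π * ((r : ℝ) + 1) * x - θ))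
      (volume.restrict (Set.Icc (0 : ℝ) 1)) :=
    fun r => Continuous.integrableOn_Icc (by fun_prop)
  have hcos (r : ℕ) : ∫ x in Set.Icc (0 : ℝ) 1, cos (2 * π * ((r : ℝ) + 1) * x - θ) = 0 := by
    simpa using integral_Icc_cos_two_pi_nat_mul_sub r.succ_ne_zero θ
  have hnorm : Summable fun r => ∫ x in Set.Icc (0 : ℝ) 1,
      ‖a r * cos (2 * π * ((r : ℝ) + 1) * x - θ)‖ :=
    ha.abs.of_nonneg_of_le (fun r => integral_nonneg fun x => norm_nonneg _) fun r =>
      (integral_mono (hint r).norm (integrable_const _) (norm_mul_cos_le θ r)).trans_eq (by simp)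
  simp [← integral_tsum_of_summable_integral_norm hint hnorm, integral_const_mul, hcos]

end TrigonometricSeries

section IndependentSums

variable {Ω ι : Type*} {mΩ : MeasurableSpace Ω} {μ : Measure Ω} {Y : ι → Ω → ℝ}
  {s : ℕ → Finset ι}

theorem stronglyMeasurable_sum_iSup_comap (t : Finset ι) :
    StronglyMeasurable[⨆ i ∈ t, MeasurableSpace.comap (Y i) inferInstance] (∑ i ∈ t, Y i) :=
  Finset.stronglyMeasurable_sum _ fun i hi => (measurable_iff_comap_le.2 (le_iSup₂ (f := fun i
    (_ : i ∈ t) => MeasurableSpace.comap (Y i) inferInstance) i hi)).stronglyMeasurable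

def finsetFiltration (hY : ∀ i, Measurable (Y i)) (hs : Monotone s) : Filtration ℕ mΩ where
  seq n := ⨆ i ∈ s n, MeasurableSpace.comap (Y i) inferInstance
  mono' _ _ hmn := biSup_mono fun _ hi => hs hmn hi
  le' _ := iSup₂_le fun i _ => (hY i).comap_le

theorem martingale_sum_finsetFiltration [IsFiniteMeasure μ] (hY : ∀ i, Measurable (Y i))
    (hs : Monotone s) (hind : iIndepFun Y μ) (hint : ∀ i, Integrable (Y i) μ)
    (hmean : ∀ i, μ[Y i] = 0) :
    Martingale (fun n => ∑ i ∈ s n, Y i) (finsetFiltration hY hs) μ := by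
  classical
  refine martingale_of_condExp_sub_eq_zero_nat (fun n => stronglyMeasurable_sum_iSup_comap _)
    (fun n => integrable_finsetSum' _ fun i _ => hint i) fun n => ?_
  have hsub : ∑ i ∈ s (n + 1), Y i - ∑ i ∈ s n, Y i = ∑ i ∈ s (n + 1) \ s n, Y i := by
    rw [← sum_sdiff (hs n.le_succ), add_sub_cancel_right]
  have hindep : Indep (⨆ i ∈ s (n + 1) \ s n, MeasurableSpace.comap (Y i) inferInstance)
      (finsetFiltration hY hs n) μ :=
    indep_iSup_of_disjoint (fun i => (hY i).comap_le) ((iIndepFun_iff_iIndep _ _ _).1 hind)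
      (S := ↑(s (n + 1) \ s n)) (by simpa using disjoint_sdiff_self_left)
  rw [hsub]
  refine (condExp_indep_eq (iSup₂_le fun i _ => (hY i).comap_le) ((finsetFiltration hY hs).le n)
    (stronglyMeasurable_sum_iSup_comap _) hindep).trans ?_
  simp only [Finset.sum_apply, integral_finsetSum _ fun i _ => hint i, hmean, sum_const_zero]
  rfl

theorem integral_abs_le_sqrt_integral_sq [IsProbabilityMeasure μ] {F : Ω → ℝ}
    (hF : MemLp F 2 μ) : ∫ ω, |F ω| ∂μ ≤ √(∫ ω, F ω ^ 2 ∂μ) := by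
  have h := variance_nonneg |F| μ
  rw [variance_eq_sub hF.abs] at h
  simp only [Pi.pow_apply, Pi.abs_apply, sq_abs, sub_nonneg] at h
  exact Real.le_sqrt_of_sq_le h

variable [IsProbabilityMeasure μ]

theorem eLpNorm_one_sum_le_sqrt_tsum_variance (hind : iIndepFun Y μ)
    (hL2 : ∀ i, MemLp (Y i) 2 μ) (hmean : ∀ i, μ[Y i] = 0)
    (hvar : Summable fun i => variance (Y i) μ) (t : Finset ι) :
    eLpNorm (∑ i ∈ t, Y i) 1 μ ≤ ENNReal.ofReal √(∑' i, variance (Y i) μ) := by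
  have hF : MemLp (∑ i ∈ t, Y i) 2 μ := memLp_finsetSum' t fun i _ => hL2 i
  have hFmean : μ[∑ i ∈ t, Y i] = 0 := by
    simp only [Finset.sum_apply, integral_finsetSum _ fun i _ => (hL2 i).integrable one_le_two,
      hmean, sum_const_zero]
  have hFvar : variance (∑ i ∈ t, Y i) μ = ∑ i ∈ t, variance (Y i) μ :=
    IndepFun.variance_sum (fun i _ => hL2 i) fun i _ j _ hij => hind.indepFun hij
  rw [eLpNorm_one_eq_lintegral_enorm, ← ofReal_integral_norm_eq_lintegral_enorm
    (hF.integrable one_le_two)]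
  refine ENNReal.ofReal_le_ofReal ?_
  calc ∫ ω, ‖(∑ i ∈ t, Y i) ω‖ ∂μ ≤ √(∫ ω, (∑ i ∈ t, Y i) ω ^ 2 ∂μ) :=
        integral_abs_le_sqrt_integral_sq hF
    _ = √(∑ i ∈ t, variance (Y i) μ) := by
        rw [← hFvar, variance_of_integral_eq_zero hF.aemeasurable hFmean]
    _ ≤ √(∑' i, variance (Y i) μ) :=
        Real.sqrt_le_sqrt (hvar.sum_le_tsum _ fun i _ => variance_nonneg _ _)

theorem iIndepFun.ae_exists_tendsto_sum (hY : ∀ i, Measurable (Y i)) (hind : iIndepFun Y μ)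
    (hL2 : ∀ i, MemLp (Y i) 2 μ) (hmean : ∀ i, μ[Y i] = 0)
    (hvar : Summable fun i => variance (Y i) μ) (hs : Monotone s) :
    ∀ᵐ ω ∂μ, ∃ ℓ, Tendsto (fun n => ∑ i ∈ s n, Y i ω) atTop (𝓝 ℓ) := by
  have hmart := martingale_sum_finsetFiltration hY hs hind
    (fun i => (hL2 i).integrable one_le_two) hmean
  simpa only [Finset.sum_apply] using hmart.submartingale.exists_ae_tendsto_of_bdd
    fun n => eLpNorm_one_sum_le_sqrt_tsum_variance hind hL2 hmean hvar (s n)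

end IndependentSums

section DivisorSeries

noncomputable def divisorCoeff (n r : ℕ) : ℝ :=
  #(n * (r + 1) ^ 2).divisors * ((r : ℝ) + 1) ^ (-(3 : ℝ) / 2)

noncomputable def divisorWeight (r : ℕ) : ℝ :=
  (#(r + 1).divisors : ℝ) ^ 2 * ((r : ℝ) + 1) ^ (-(3 : ℝ) / 2)

theorem summable_divisorWeight : Summable divisorWeight := by
  have h := (summable_nat_add_iff 1).2 (summable_card_divisors_sq_mul_rpow_neg (s := 3 / 2)
    (by norm_num))
  refine h.congr fun r => ?_
  simp [divisorWeight, neg_div]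

variable (n : ℕ)

theorem abs_divisorCoeff_le (r : ℕ) :
    |divisorCoeff n r| ≤ #n.divisors * divisorWeight r := by
  have hd : #(n * (r + 1) ^ 2).divisors ≤ #n.divisors * #(r + 1).divisors ^ 2 :=
    calc #(n * (r + 1) ^ 2).divisors ≤ #n.divisors * #((r + 1) * (r + 1)).divisors := by
          rw [← sq]; exact Nat.card_divisors_mul_le _ _
      _ ≤ #n.divisors * #(r + 1).divisors ^ 2 := by
          rw [sq]; exact Nat.mul_le_mul_left _ (Nat.card_divisors_mul_le _ _)
  rw [divisorCoeff, divisorWeight, abs_of_nonneg (by positivity), ← mul_assoc]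
  exact mul_le_mul_of_nonneg_right (by exact_mod_cast hd) (by positivity)

theorem summable_divisorCoeff : Summable (divisorCoeff n) :=
  (summable_divisorWeight.mul_left _).of_norm_bounded (abs_divisorCoeff_le n)

theorem tsum_abs_divisorCoeff_le :
    ∑' r, |divisorCoeff n r| ≤ #n.divisors * ∑' r, divisorWeight r := by
  rw [← tsum_mul_left]
  exact (summable_divisorCoeff n).abs.tsum_le_tsum (abs_divisorCoeff_le n)
    (summable_divisorWeight.mul_left _)

/-- The summand of `F_𝕏` indexed by `n`, as a function of `X_n = x`. -/
noncomputable def divisorSeriesTerm (n : ℕ) (x : ℝ) : ℝ :=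
  1 / (π * √2) * (n : ℝ) ^ (-(3 : ℝ) / 4) *
    ∑' r, divisorCoeff n r * cos (2 * π * ((r : ℝ) + 1) * x - π / 4)

noncomputable def divisorSeriesTermBound (n : ℕ) : ℝ :=
  1 / (π * √2) * (n : ℝ) ^ (-(3 : ℝ) / 4) * (#n.divisors * ∑' r, divisorWeight r)

theorem continuous_divisorSeriesTerm : Continuous (divisorSeriesTerm n) :=
  continuous_const.mul (continuous_tsum_mul_cos _ (summable_divisorCoeff n))

theorem abs_divisorSeriesTerm_le (x : ℝ) :
    |divisorSeriesTerm n x| ≤ divisorSeriesTermBound n := by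
  rw [divisorSeriesTerm, divisorSeriesTermBound, abs_mul, abs_of_nonneg (by positivity)]
  gcongr
  exact (abs_tsum_mul_cos_le _ (summable_divisorCoeff n) x).trans (tsum_abs_divisorCoeff_le n)

theorem integral_Icc_divisorSeriesTerm :
    ∫ x in Set.Icc (0 : ℝ) 1, divisorSeriesTerm n x = 0 := by
  simp only [divisorSeriesTerm, integral_const_mul,
    integral_Icc_tsum_mul_cos _ (summable_divisorCoeff n), mul_zero]

theorem summable_divisorSeriesTermBound_sq : Summable fun n => divisorSeriesTermBound n ^ 2 := by
  have h := (summable_card_divisors_sq_mul_rpow_neg (s := 3 / 2) (by norm_num)).mul_left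
    ((1 / (π * √2) * ∑' r, divisorWeight r) ^ 2)
  refine h.congr fun n => ?_
  have hrpow : ((n : ℝ) ^ (-(3 : ℝ) / 4)) ^ 2 = (n : ℝ) ^ (-(3 / 2 : ℝ)) := by
    rw [← Real.rpow_mul_natCast (Nat.cast_nonneg n)]
    norm_num
  rw [divisorSeriesTermBound, ← hrpow]
  ring

end DivisorSeries

section RandomDivisorSeries

variable {Ω : Type*} {mΩ : MeasurableSpace Ω} {μ : Measure Ω} {Z : Ω → ℝ} (n : ℕ)

theorem memLp_divisorSeriesTerm_comp [IsFiniteMeasure μ] (hZ : Measurable Z) :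
    MemLp (fun ω => divisorSeriesTerm n (Z ω)) 2 μ :=
  MemLp.of_bound ((continuous_divisorSeriesTerm n).measurable.comp hZ).aestronglyMeasurable _
    (ae_of_all _ fun ω => abs_divisorSeriesTerm_le n (Z ω))

theorem integral_divisorSeriesTerm_comp (hZ : Measurable Z)
    (hunif : μ.map Z = volume.restrict (Set.Icc 0 1)) :
    μ[fun ω => divisorSeriesTerm n (Z ω)] = 0 := by
  rw [← integral_map hZ.aemeasurable (continuous_divisorSeriesTerm n).aestronglyMeasurable, hunif]
  exact integral_Icc_divisorSeriesTerm n

theorem variance_divisorSeriesTerm_comp_le [IsProbabilityMeasure μ] (hZ : Measurable Z) :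
    variance (fun ω => divisorSeriesTerm n (Z ω)) μ ≤ divisorSeriesTermBound n ^ 2 :=
  (variance_le_sq_of_bounded (ae_of_all _ fun ω => abs_le.1 (abs_divisorSeriesTerm_le n (Z ω)))
    ((continuous_divisorSeriesTerm n).measurable.comp hZ).aemeasurable).trans_eq (by ring)

end RandomDivisorSeries

open MeasureTheory ProbabilityTheory Filter in
/-- Almost sure convergence of the random trigonometric series
`F_𝕏 = (1/(π√2)) ∑_{n sqfree} n^{-3/4} ∑_{r ≥ 1} d(nr²) r^{-3/2} cos(2π r X_n - π/4)`,
where the `X_n` are i.i.d. uniform on `[0,1]` indexed by square-free positive integers. -/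
theorem random_series_converges_ae
    {Ω : Type*} [MeasurableSpace Ω] (μ : Measure Ω) [IsProbabilityMeasure μ]
    (X : ℕ → Ω → ℝ) (hmeas : ∀ n, Measurable (X n))
    (hunif : ∀ n, Squarefree n →
      Measure.map (X n) μ = MeasureTheory.volume.restrict (Set.Icc (0 : ℝ) 1))
    (hindep : iIndepFun
      (fun n : {n : ℕ // Squarefree n} => X n.1) μ) :
    ∀ᵐ ω ∂μ, ∃ ℓ : ℝ, Tendsto (fun K : ℕ =>
        ∑ n ∈ (Finset.Icc 1 K).filter Squarefree,
          (1 / (Real.pi * Real.sqrt 2)) * (n : ℝ) ^ (-(3 : ℝ) / 4) *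
            ∑' r : ℕ, ((n * (r + 1) ^ 2).divisors.card : ℝ) * ((r : ℝ) + 1) ^ (-(3 : ℝ) / 2) *
              Real.cos (2 * Real.pi * ((r : ℝ) + 1) * X n ω - Real.pi / 4))
      atTop (nhds ℓ) := by
  have hconv := iIndepFun.ae_exists_tendsto_sum
    (Y := fun (i : {n : ℕ // Squarefree n}) ω => divisorSeriesTerm i (X i ω))
    (s := fun K => (Finset.Icc 1 K).subtype Squarefree)
    (fun i => (continuous_divisorSeriesTerm i).measurable.comp (hmeas i))
    (hindep.comp (fun i => divisorSeriesTerm i)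
      fun i => (continuous_divisorSeriesTerm i).measurable)
    (fun i => memLp_divisorSeriesTerm_comp i (hmeas i))
    (fun i => integral_divisorSeriesTerm_comp i (hmeas i) (hunif i i.2))
    ((summable_divisorSeriesTermBound_sq.subtype _).of_nonneg_of_le
      (fun i => variance_nonneg _ _) fun i => variance_divisorSeriesTerm_comp_le i (hmeas i))
    fun K L hKL => Finset.subtype_mono (Finset.Icc_subset_Icc_right hKL)
  filter_upwards [hconv] with ω ⟨ℓ, hℓ⟩
  rw [funext fun K => sum_subtype_eq_sum_filter (fun n => divisorSeriesTerm n (X n ω))] at hℓ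
  exact ⟨ℓ, hℓ⟩
end
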